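/- arXiv:2403.09876 — 2 statements merged into one kernel-verified Lean document; each statement's English description precedes it below -/
import Mathlib

section
/- Let m ≥ 0 be an even integer and let t > 0. Then U_m(t, x) > 0 for every real x; in particular x ↦ U_m(t, x) has no real zeros. -/
/-- The `m`-th heat polynomial
`U_m(t, x) = ∑_{k=0}^{⌊m/2⌋} (m! / (k! (m−2k)!)) x^{m−2k} t^k`. -/
noncomputable def heatPoly (m : ℕ) (t x : ℝ) : ℝ :=
  ∑ k ∈ Finset.range (m / 2 + 1),
    ((Nat.factorial m : ℝ) / (Nat.factorial k * Nat.factorial (m - 2 * k))) *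
      x ^ (m - 2 * k) * t ^ k

/-- For an even integer `m ≥ 0` and `t > 0`, `U_m(t, x) > 0` for every real `x`;
in particular `x ↦ U_m(t, x)` has no real zeros. -/
theorem heatPoly_pos_of_even (m : ℕ) (hm : Even m) (t : ℝ) (ht : 0 < t) :
    (∀ x : ℝ, 0 < heatPoly m t x) ∧ {x : ℝ | heatPoly m t x = 0} = ∅ := by
  have hpos : ∀ x : ℝ, 0 < heatPoly m t x := by
    intro x
    unfold heatPoly
    apply Finset.sum_pos'
    · intro k hk
      have hk' : k ≤ m / 2 := Nat.lt_succ_iff.mp (Finset.mem_range.mp hk)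
      have h2k : 2 * k ≤ m := by omega
      have heven : Even (m - 2 * k) := by
        obtain ⟨n, hn⟩ := hm
        exact ⟨n - k, by omega⟩
      have hx : (0:ℝ) ≤ x ^ (m - 2 * k) := heven.pow_nonneg x
      have hc : (0:ℝ) < (Nat.factorial m : ℝ) /
          (Nat.factorial k * Nat.factorial (m - 2 * k)) := by
        apply div_pos
        · exact_mod_cast Nat.factorial_pos m
        · positivity
      positivity
    · refine ⟨m / 2, Finset.mem_range.mpr (Nat.lt_succ_self _), ?_⟩
      obtain ⟨n, hn⟩ := hm
      have h : m - 2 * (m / 2) = 0 := by omega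
      rw [h]
      have hc : (0:ℝ) < (Nat.factorial m : ℝ) /
          (Nat.factorial (m / 2) * Nat.factorial 0) := by
        apply div_pos
        · exact_mod_cast Nat.factorial_pos m
        · positivity
      simpa using mul_pos (mul_pos hc (by norm_num : (0:ℝ) < 1)) (pow_pos ht _)
  refine ⟨hpos, ?_⟩
  ext x
  simp [ne_of_gt (hpos x)]
end

section
/- For every integer m ≥ 0 and every t < 0, the function x ↦ U_m(t, x) has exactly m real zeros, i.e. the set {x ∈ ℝ : U_m(t, x) = 0} has exactly m elements. -/
open Finset Polynomial Filter Nat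

theorem exists_mem_Ioo_eq_zero_of_mul_neg {α δ : Type*} [ConditionallyCompleteLinearOrder α]
    [TopologicalSpace α] [OrderTopology α] [DenselyOrdered α] [Field δ] [LinearOrder δ]
    [IsStrictOrderedRing δ] [TopologicalSpace δ] [OrderClosedTopology δ] {f : α → δ} {a b : α}
    (hab : a ≤ b) (hf : ContinuousOn f (Set.Icc a b)) (h : f a * f b < 0) :
    ∃ c ∈ Set.Ioo a b, f c = 0 := by
  rcases mul_neg_iff.1 h with ⟨ha, hb⟩ | ⟨ha, hb⟩
  · exact intermediate_value_Ioo' hab hf ⟨hb, ha⟩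
  · exact intermediate_value_Ioo hab hf ⟨ha, hb⟩

theorem exists_interlacing_zeros {α δ : Type*} [ConditionallyCompleteLinearOrder α]
    [TopologicalSpace α] [OrderTopology α] [DenselyOrdered α] [Field δ] [LinearOrder δ]
    [IsStrictOrderedRing δ] [TopologicalSpace δ] [OrderClosedTopology δ] {f : α → δ}
    (hf : Continuous f) {n : ℕ} {x : Fin (n + 1) → α} (hx : StrictMono x)
    (hsign : ∀ i : Fin (n + 1), 0 < (-1) ^ (n - (i : ℕ)) * f (x i)) :
    ∃ s : Fin n → α, StrictMono s ∧ (∀ i, x i.castSucc < s i ∧ s i < x i.succ) ∧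
      ∀ i, f (s i) = 0 := by
  have hchange (i : Fin n) : f (x i.castSucc) * f (x i.succ) < 0 := by
    have h₁ := hsign i.castSucc
    have h₂ := hsign i.succ
    rw [Fin.val_castSucc, show n - i = n - i.succ + 1 by simp; omega, pow_succ] at h₁
    have hsq : (-1 : δ) ^ (n - i.succ) * (-1) ^ (n - i.succ) = 1 := by rw [← mul_pow]; norm_num
    nlinarith [mul_pos h₁ h₂]
  choose s hs hzero using fun i => exists_mem_Ioo_eq_zero_of_mul_neg
    (hx (Fin.castSucc_lt_succ (i := i))).le hf.continuousOn (hchange i)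
  refine ⟨s, fun i j hij => ?_, hs, hzero⟩
  calc s i < x i.succ := (hs i).2
    _ ≤ x j.castSucc := hx.monotone (Fin.succ_le_castSucc_iff.2 hij)
    _ < s j := (hs j).1

theorem neg_one_pow_mul_prod_sub_pos {R : Type*} [CommRing R] [LinearOrder R]
    [IsStrictOrderedRing R] {n k : ℕ} (r : Fin n → R) {y : R}
    (hlt : ∀ i : Fin n, (i : ℕ) < k → r i < y) (hgt : ∀ i : Fin n, k ≤ i → y < r i) :
    0 < (-1) ^ (n - k) * ∏ i, (y - r i) := by
  induction n with
  | zero => simp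
  | succ n ih =>
    have hprod := ih (fun i => r i.castSucc) (fun i hi => hlt _ hi) (fun i hi => hgt _ hi)
    rw [Fin.prod_univ_castSucc, ← mul_assoc]
    rcases lt_or_ge n k with hn | hn
    · rw [show n + 1 - k = n - k by omega]
      exact mul_pos hprod (sub_pos.2 (hlt _ (by simpa using hn)))
    · rw [show n + 1 - k = n - k + 1 by omega, pow_succ]
      have hlast : y < r (Fin.last n) := hgt _ (by simpa using hn)
      calc (0 : R)
          < ((-1) ^ (n - k) * ∏ i : Fin n, (y - r i.castSucc)) * (r (Fin.last n) - y) :=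
            mul_pos hprod (sub_pos.2 hlast)
        _ = _ := by ring

theorem Polynomial.eval_eq_prod_sub_of_monic {R : Type*} [CommRing R] [IsDomain R] {p : R[X]}
    {n : ℕ} (hp : p.Monic) (hdeg : p.natDegree = n) {r : Fin n → R} (hr : Function.Injective r)
    (hroot : ∀ i, p.IsRoot (r i)) (y : R) : p.eval y = ∏ i, (y - r i) := by
  classical
  set s : Multiset R := univ.val.map r
  have hle : s ≤ p.roots :=
    (Multiset.le_iff_subset (univ.nodup.map hr)).2 fun a ha => by
      obtain ⟨i, -, rfl⟩ := Multiset.mem_map.1 ha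
      exact (mem_roots hp.ne_zero).2 (hroot i)
  have hroots : p.roots = s :=
    (Multiset.eq_of_le_of_card_le hle (by simpa [s, hdeg] using p.card_roots')).symm
  rw [← prod_multiset_X_sub_C_of_monic_of_roots_card_eq hp (by rw [hroots, hdeg]; simp [s]),
    hroots, eval_multiset_prod, Finset.prod_eq_multiset_prod]
  simp only [s, Multiset.map_map, Function.comp_def, eval_sub, eval_X, eval_C]

theorem Polynomial.Monic.eventually_pos_eval {p : ℝ[X]} (hp : p.Monic) (hdeg : 0 < p.natDegree) :
    ∀ᶠ x in atTop, 0 < p.eval x :=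
  (tendsto_atTop_of_leadingCoeff_nonneg p (natDegree_pos_iff_degree_pos.1 hdeg)
    (hp.leadingCoeff ▸ zero_le_one)).eventually_gt_atTop 0

theorem Fin.strictMono_cons_snoc {α : Type*} [Preorder α] {n : ℕ} {r : Fin (n + 1) → α}
    (hr : StrictMono r) {a b : α} (ha : a < r 0) (hb : r (Fin.last n) < b) :
    StrictMono (Fin.cons a (Fin.snoc r b) : Fin (n + 3) → α) := by
  have har (i : Fin (n + 1)) : a < r i := ha.trans_le (hr.monotone (Fin.zero_le i))
  refine Fin.strictMono_cons.2 ⟨fun j => ?_, ?_⟩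
  · induction j using Fin.lastCases with
    | last => simpa using (har (Fin.last n)).trans hb
    | cast i => simpa using har i
  rw [← Fin.insertNth_last', Fin.strictMono_insertNth_iff]
  exact ⟨hr, fun i _ => (hr.monotone (Fin.le_last i)).trans_lt hb,
    fun i hi => absurd hi (not_le.2 (Fin.castSucc_lt_last i))⟩

/-- `m! / (k! (m - 2k)!)`, written so that it vanishes for `2k > m`. -/
noncomputable def heatCoeff (m k : ℕ) : ℝ := m.choose (2 * k) * ((2 * k)! / k ! : ℝ)

theorem heatPoly_eq_sum_range {m N : ℕ} (hN : m / 2 < N) (t x : ℝ) :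
    heatPoly m t x = ∑ k ∈ range N, heatCoeff m k * x ^ (m - 2 * k) * t ^ k := by
  have hsub : range (m / 2 + 1) ⊆ range N := range_subset_range.2 hN
  rw [heatPoly, ← sum_subset hsub fun k _ hk => ?_]
  · refine sum_congr rfl fun k hk => ?_
    have hk : 2 * k ≤ m := by rw [mem_range] at hk; omega
    rw [heatCoeff, Nat.cast_choose ℝ hk]
    field_simp
  · rw [mem_range] at hk
    rw [heatCoeff, Nat.choose_eq_zero_of_lt (by omega)]
    simp

theorem heatCoeff_add_two_succ (m k : ℕ) :
    heatCoeff (m + 2) (k + 1) = heatCoeff (m + 1) (k + 1) + 2 * (m + 1) * heatCoeff m k := by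
  have hchoose : ((m + 1 : ℕ) : ℝ) * m.choose (2 * k)
      = (m + 1).choose (2 * k + 1) * (2 * k + 1 : ℕ) := by
    exact_mod_cast Nat.add_one_mul_choose_eq m (2 * k)
  rw [heatCoeff, heatCoeff, heatCoeff, show 2 * (k + 1) = 2 * k + 1 + 1 by ring,
    Nat.choose_succ_succ' (m + 1), Nat.factorial_succ (2 * k + 1), Nat.factorial_succ (2 * k),
    Nat.factorial_succ k]
  push_cast at hchoose ⊢
  field_simp
  linear_combination (-2 * (k + 1) : ℝ) * hchoose

theorem heatPoly_add_two (m : ℕ) (t x : ℝ) :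
    heatPoly (m + 2) t x = x * heatPoly (m + 1) t x + 2 * (m + 1) * t * heatPoly m t x := by
  rw [heatPoly_eq_sum_range (N := m + 1 + 1) (by omega),
    heatPoly_eq_sum_range (N := m + 1 + 1) (by omega),
    heatPoly_eq_sum_range (N := m + 1) (by omega), sum_range_succ' _ (m + 1),
    sum_range_succ' _ (m + 1), mul_add, mul_sum, mul_sum, add_right_comm _ (x * _),
    ← sum_add_distrib]
  congr 1
  · refine sum_congr rfl fun k _ => ?_
    rw [heatCoeff_add_two_succ, show m + 2 - 2 * (k + 1) = m - 2 * k by omega]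
    rcases le_or_gt (2 * k + 1) m with hk | hk
    · rw [show m - 2 * k = m + 1 - 2 * (k + 1) + 1 by omega]
      ring
    · rw [heatCoeff, Nat.choose_eq_zero_of_lt (by omega)]
      ring
  · simp [heatCoeff]
    ring

noncomputable def heatPolynomial (t : ℝ) : ℕ → ℝ[X]
  | 0 => 1
  | 1 => X
  | m + 2 => X * heatPolynomial t (m + 1) + C (2 * (m + 1) * t) * heatPolynomial t m

section heatPolynomial

variable (t : ℝ)

theorem eval_heatPolynomial : ∀ (m : ℕ) (x : ℝ), (heatPolynomial t m).eval x = heatPoly m t x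
  | 0, x => by simp [heatPolynomial, heatPoly]
  | 1, x => by simp [heatPolynomial, heatPoly]
  | m + 2, x => by
    simp [heatPolynomial, heatPoly_add_two, eval_heatPolynomial m, eval_heatPolynomial (m + 1)]

theorem monic_heatPolynomial_and_natDegree :
    ∀ m : ℕ, (heatPolynomial t m).Monic ∧ (heatPolynomial t m).natDegree = m
  | 0 => by simp [heatPolynomial]
  | 1 => by simp [heatPolynomial]
  | m + 2 => by
    obtain ⟨hmonic₁, hdeg₁⟩ := monic_heatPolynomial_and_natDegree (m + 1)
    obtain ⟨-, hdeg₀⟩ := monic_heatPolynomial_and_natDegree m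
    have hlead : (X * heatPolynomial t (m + 1)).natDegree = m + 2 := by
      rw [monic_X.natDegree_mul hmonic₁, natDegree_X, hdeg₁, add_comm]
    have hlt : (C (2 * (m + 1) * t) * heatPolynomial t m).degree
        < (X * heatPolynomial t (m + 1)).degree :=
      degree_lt_degree ((natDegree_C_mul_le _ _).trans_lt (by omega))
    exact ⟨(monic_X.mul hmonic₁).add_of_left hlt,
      (natDegree_add_eq_left_of_degree_lt hlt).trans hlead⟩

theorem monic_heatPolynomial (m : ℕ) : (heatPolynomial t m).Monic :=
  (monic_heatPolynomial_and_natDegree t m).1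

theorem natDegree_heatPolynomial (m : ℕ) : (heatPolynomial t m).natDegree = m :=
  (monic_heatPolynomial_and_natDegree t m).2

theorem eval_neg_heatPolynomial :
    ∀ (m : ℕ) (x : ℝ), (heatPolynomial t m).eval (-x) = (-1) ^ m * (heatPolynomial t m).eval x
  | 0, x => by simp [heatPolynomial]
  | 1, x => by simp [heatPolynomial]
  | m + 2, x => by
    simp only [heatPolynomial, eval_add, eval_mul, eval_X, eval_C, eval_neg_heatPolynomial m,
      eval_neg_heatPolynomial (m + 1)]
    ring

theorem eval_heatPolynomial_add_two_of_eval_eq_zero {m : ℕ} {y : ℝ}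
    (hy : (heatPolynomial t (m + 1)).eval y = 0) :
    (heatPolynomial t (m + 2)).eval y = 2 * (m + 1) * t * (heatPolynomial t m).eval y := by
  simp [heatPolynomial, hy]

end heatPolynomial

section interlacing

variable {t : ℝ}

theorem exists_zeros_heatPolynomial_add_two (ht : t < 0) {m : ℕ} {r : Fin (m + 1) → ℝ}
    (hr : StrictMono r) (hroot : ∀ i, (heatPolynomial t (m + 1)).eval (r i) = 0)
    (hsign : ∀ i : Fin (m + 1), 0 < (-1) ^ (m - (i : ℕ)) * (heatPolynomial t m).eval (r i)) :
    ∃ s : Fin (m + 2) → ℝ, StrictMono s ∧ (∀ j, (heatPolynomial t (m + 2)).eval (s j) = 0) ∧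
      ∀ j : Fin (m + 2), 0 < (-1) ^ (m + 1 - (j : ℕ)) * (heatPolynomial t (m + 1)).eval (s j) := by
  set p := heatPolynomial t (m + 2)
  have hfar : ∀ᶠ B in atTop, 0 < p.eval B :=
    (monic_heatPolynomial t _).eventually_pos_eval (by simp [natDegree_heatPolynomial])
  obtain ⟨B, hB, hBr, hBl⟩ := (hfar.and ((eventually_gt_atTop (r (Fin.last m))).and
    (eventually_gt_atTop (-r 0)))).exists
  set x : Fin (m + 3) → ℝ := Fin.cons (-B) (Fin.snoc r B)
  have hxr (i : Fin (m + 1)) : x i.castSucc.succ = r i := by simp [x]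
  have hx : StrictMono x := Fin.strictMono_cons_snoc hr (neg_lt.1 hBl) hBr
  have hsignx (j : Fin (m + 3)) : 0 < (-1) ^ (m + 2 - (j : ℕ)) * p.eval (x j) := by
    induction j using Fin.cases with
    | zero =>
      simpa [x, p, eval_neg_heatPolynomial, ← mul_assoc, ← mul_pow] using hB
    | succ k =>
      induction k using Fin.lastCases with
      | last => simpa [x] using hB
      | cast i =>
        rw [hxr, eval_heatPolynomial_add_two_of_eval_eq_zero t (hroot i),
          show m + 2 - ((i.castSucc.succ : Fin (m + 3)) : ℕ) = m - i + 1 by simp; omega, pow_succ]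
        have hcoeff : 0 < 2 * ((m : ℝ) + 1) * -t := mul_pos (by positivity) (neg_pos.2 ht)
        calc (0 : ℝ)
            < 2 * (m + 1) * -t * ((-1) ^ (m - (i : ℕ)) * (heatPolynomial t m).eval (r i)) :=
              mul_pos hcoeff (hsign i)
          _ = _ := by ring
  obtain ⟨s, hs, hsx, hszero⟩ := exists_interlacing_zeros p.continuous hx hsignx
  refine ⟨s, hs, hszero, fun j => ?_⟩
  rw [eval_eq_prod_sub_of_monic (monic_heatPolynomial t _) (natDegree_heatPolynomial t _)
    hr.injective hroot]
  refine neg_one_pow_mul_prod_sub_pos r (fun i hi => ?_) (fun i hi => ?_)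
  · calc r i = x i.castSucc.succ := (hxr i).symm
      _ ≤ x j.castSucc := hx.monotone (by simp [Fin.le_iff_val_le_val]; omega)
      _ < s j := (hsx j).1
  · calc s j < x j.succ := (hsx j).2
      _ ≤ x i.castSucc.succ := hx.monotone (by simp [Fin.le_iff_val_le_val]; omega)
      _ = r i := hxr i

theorem exists_zeros_heatPolynomial_succ (ht : t < 0) (m : ℕ) :
    ∃ r : Fin (m + 1) → ℝ, StrictMono r ∧ (∀ i, (heatPolynomial t (m + 1)).eval (r i) = 0) ∧
      ∀ i : Fin (m + 1), 0 < (-1) ^ (m - (i : ℕ)) * (heatPolynomial t m).eval (r i) := by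
  induction m with
  | zero =>
    exact ⟨![0], strictMono_vecEmpty, by simp [heatPolynomial], by simp [heatPolynomial]⟩
  | succ m ih =>
    obtain ⟨r, hr, hroot, hsign⟩ := ih
    exact exists_zeros_heatPolynomial_add_two ht hr hroot hsign

end interlacing

/-- For every integer `m ≥ 0` and every `t < 0`, the function `x ↦ U_m(t, x)`
has exactly `m` real zeros. -/
theorem heatPoly_card_zeros (m : ℕ) (t : ℝ) (ht : t < 0) :
    {x : ℝ | heatPoly m t x = 0}.ncard = m := by
  have hzeros : {x : ℝ | heatPoly m t x = 0} = (heatPolynomial t m).rootSet ℝ := by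
    ext x
    simp [mem_rootSet, (monic_heatPolynomial t m).ne_zero, eval_heatPolynomial]
  rw [hzeros]
  refine le_antisymm ((ncard_rootSet_le _ ℝ).trans_eq (natDegree_heatPolynomial t m)) ?_
  rcases m with _ | m
  · exact zero_le _
  obtain ⟨r, hr, hroot, -⟩ := exists_zeros_heatPolynomial_succ ht m
  calc m + 1 = (Set.range r).ncard := by simp [Set.ncard_range_of_injective hr.injective]
    _ ≤ _ := Set.ncard_le_ncard (Set.range_subset_iff.2 fun i =>
        mem_rootSet.2 ⟨(monic_heatPolynomial t _).ne_zero, by simpa using hroot i⟩)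
end
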